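/- Let 𝒜 be a set. Consider the functor κ : fSets^op → Set sending a finite nonempty set I to the set of functions I → 𝒜, which sends a surjection φ : I → J to the precomposition map Map(J, 𝒜) → Map(I, 𝒜). Then the colimit of κ in Set is in natural bijection with the set of finite nonempty subsets of 𝒜, the bijection sending the class of f : I → 𝒜 to its image f(I). -/

import Mathlib

open CategoryTheory Function Limits

/-- An object of `fSets`: a finite nonempty set. -/
structure FSet : Type 1 where
  I : Type
  iFin : Finite I
  iNe : Nonempty I

structure FSurj (X Y : FSet) : Type where
  τ : X.I → Y.I
  hτ : Function.Surjective τ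

theorem FSurj.ext' {X Y : FSet} : ∀ {f g : FSurj X Y}, f.τ = g.τ → f = g
  | ⟨_, _⟩, ⟨_, _⟩, rfl => rfl

instance : Category FSet where
  Hom := FSurj
  id X := ⟨_root_.id, Function.surjective_id⟩
  comp := fun f g => ⟨g.τ ∘ f.τ, g.hτ.comp f.hτ⟩
  id_comp := fun f => FSurj.ext' rfl
  comp_id := fun f => FSurj.ext' rfl
  assoc := fun f g h => FSurj.ext' rfl

/-- The functor `κ : fSets^op → Set`, `I ↦ Map(I, 𝒜)`, with transition maps given by
precomposition with the surjections. -/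
def kappa (𝒜 : Type) : FSetᵒᵖ ⥤ Type where
  obj X := X.unop.I → 𝒜
  map h := TypeCat.ofHom fun f => f ∘ h.unop.τ
  map_id _ := rfl
  map_comp _ _ := rfl

/-- The cocone over `κ` whose apex is the set of finite nonempty subsets of `𝒜`, with
components sending `f : I → 𝒜` to its image `f(I)`. -/
def iotaCocone (𝒜 : Type) : Limits.Cocone (kappa 𝒜) where
  pt := {S : Set 𝒜 // S.Finite ∧ S.Nonempty}
  ι :=
    { app := fun X => TypeCat.ofHom fun f => ⟨Set.range f,
        (by have := X.unop.iFin; exact Set.finite_range f),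
        (by have := X.unop.iNe; exact Set.range_nonempty f)⟩
      naturality := by
        intro X Y h
        ext f
        refine Subtype.ext ?_
        exact h.unop.hτ.range_comp f }

/-! Every `f : I → 𝒜` factors as the surjection of `I` onto its image `f(I)` followed by the
inclusion `f(I) ↪ 𝒜`, so in any cocone over `κ` the component at `f` agrees with the component
at the inclusion of `f(I)`. A cocone is therefore determined by its values on inclusions of
finite nonempty subsets, which gives the unique descended map. -/

section

variable {𝒜 : Type}

def FSet.ofSubset (S : {S : Set 𝒜 // S.Finite ∧ S.Nonempty}) : FSet :=
  ⟨S.1, S.2.1.to_subtype, S.2.2.to_subtype⟩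

def FSet.toRange {X : FSet} (f : X.I → 𝒜) :
    X ⟶ FSet.ofSubset ((iotaCocone 𝒜).ι.app (.op X) f) :=
  ⟨Set.rangeFactorization f, Set.rangeFactorization_surjective⟩

lemma iotaCocone_app_val (S : {S : Set 𝒜 // S.Finite ∧ S.Nonempty}) :
    (iotaCocone 𝒜).ι.app (.op (FSet.ofSubset S)) (Subtype.val : S.1 → 𝒜) = S :=
  Subtype.ext Subtype.range_coe

lemma kappa_cocone_app_eq_app_val (s : Cocone (kappa 𝒜)) (X : FSetᵒᵖ) (f : X.unop.I → 𝒜) :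
    s.ι.app X f = s.ι.app (.op (FSet.ofSubset ((iotaCocone 𝒜).ι.app X f))) Subtype.val :=
  ConcreteCategory.congr_hom (s.ι.naturality (FSet.toRange (X := X.unop) f).op) Subtype.val

end

/-- The colimit over `fSets^op` of `I ↦ Map(I, 𝒜)` is the set of finite nonempty
subsets of `𝒜`, via `f ↦ f(I)`. -/
theorem stmt13 (𝒜 : Type) : Nonempty (Limits.IsColimit (iotaCocone 𝒜)) :=
  ⟨{ desc := fun s => TypeCat.ofHom fun S => s.ι.app (.op (FSet.ofSubset S)) Subtype.val
     fac := fun s X => by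
       ext f
       exact (kappa_cocone_app_eq_app_val s X f).symm
     uniq := fun s m hm => by
       ext S
       exact (congrArg m (iotaCocone_app_val S).symm).trans
         (ConcreteCategory.congr_hom (hm (.op (FSet.ofSubset S))) Subtype.val) }⟩
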